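/- arXiv:1210.7368 — 2 statements merged into one kernel-verified Lean document; each statement's English description precedes it below -/
import Mathlib

section
/- If f is a polynomial function of degree at most n, then the function x ↦ ∑_{i=0}^{n} (-1)^i f^{(i)}(x) · x^{i+1}/(i+1)! is an antiderivative of f, i.e., its derivative at every x equals f(x). -/
/-!
By the product rule, the derivative of `(-1)^i f^{(i)}(y) y^{i+1}/(i+1)!` is `T i - T (i+1)` with
`T i = (-1)^i f^{(i)}(y) y^i / i!`, so the derivative of the sum telescopes to
`T 0 - T (n+1) = f(y) - T (n+1)`. For a polynomial of degree at most `n`, `f^{(n+1)} = 0`.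
-/

open Polynomial Finset Nat

section

variable {𝕜 : Type*} [NontriviallyNormedField 𝕜]

theorem Polynomial.iteratedDeriv_eval (p : 𝕜[X]) (i : ℕ) :
    iteratedDeriv i (fun x => p.eval x) = fun x => (derivative^[i] p).eval x := by
  induction i with
  | zero => simp
  | succ k ih =>
    rw [iteratedDeriv_succ, ih, Function.iterate_succ_apply']
    funext x
    exact Polynomial.deriv _

theorem Polynomial.iteratedDeriv_eval_eq_zero {p : 𝕜[X]} {i : ℕ} (hi : p.natDegree < i)
    (x : 𝕜) :
    iteratedDeriv i (fun x => p.eval x) x = 0 := by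
  simp [p.iteratedDeriv_eval, iterate_derivative_eq_zero hi]

theorem hasDerivAt_iteratedDeriv_mul_pow_div_factorial [CharZero 𝕜] {f : 𝕜 → 𝕜} {x : 𝕜} (i : ℕ)
    (hf : DifferentiableAt 𝕜 (iteratedDeriv i f) x) :
    HasDerivAt (fun y => (-1) ^ i * iteratedDeriv i f y * y ^ (i + 1) / (i + 1)!)
      ((-1) ^ i * iteratedDeriv i f x * x ^ i / (i ! : 𝕜) -
        (-1) ^ (i + 1) * iteratedDeriv (i + 1) f x * x ^ (i + 1) / (i + 1)!) x := by
  have hD : HasDerivAt (iteratedDeriv i f) (iteratedDeriv (i + 1) f x) x := by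
    rw [iteratedDeriv_succ]
    exact hf.hasDerivAt
  refine (((hD.const_mul ((-1) ^ i)).mul (hasDerivAt_pow (i + 1) x)).div_const
    ((i + 1)! : 𝕜)).congr_deriv ?_
  rw [Nat.factorial_succ]
  push_cast
  field_simp
  ring

theorem hasDerivAt_sum_alternating_iteratedDeriv [CharZero 𝕜] {f : 𝕜 → 𝕜} {n : ℕ}
    (hf : ContDiff 𝕜 (n + 1) f) (x : 𝕜) :
    HasDerivAt
      (fun y => ∑ i ∈ range (n + 1), (-1) ^ i * iteratedDeriv i f y * y ^ (i + 1) / (i + 1)!)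
      (f x - (-1) ^ (n + 1) * iteratedDeriv (n + 1) f x * x ^ (n + 1) / (n + 1)!) x := by
  have hterm := fun i (hi : i ∈ range (n + 1)) =>
    hasDerivAt_iteratedDeriv_mul_pow_div_factorial i <|
      hf.differentiable_iteratedDeriv i (by exact_mod_cast mem_range.1 hi) x
  refine (HasDerivAt.fun_sum hterm).congr_deriv ?_
  rw [sum_range_sub' (fun i => (-1) ^ i * iteratedDeriv i f x * x ^ i / (i ! : 𝕜))]
  simp

end

theorem stmt_3 (n : ℕ) (p : Polynomial ℝ) (hp : p.natDegree ≤ n)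
    (f : ℝ → ℝ) (hf : f = fun x => p.eval x) :
    ∀ x : ℝ,
      deriv (fun y => ∑ i ∈ Finset.range (n + 1),
        (-1 : ℝ) ^ i * iteratedDeriv i f y * y ^ (i + 1) / (Nat.factorial (i + 1) : ℝ)) x
        = f x := by
  subst hf
  intro x
  have hsmooth : ContDiff ℝ (n + 1) fun x => p.eval x := by
    simpa using p.contDiff_aeval (𝕜 := ℝ) (n + 1)
  rw [(hasDerivAt_sum_alternating_iteratedDeriv hsmooth x).deriv,
    iteratedDeriv_eval_eq_zero (Nat.lt_succ_of_le hp)]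
  simp
end

section
/- If f is smooth and there exist M, R > 0 with |f^{(n)}(t)| ≤ M·R^n for all n and all t in [0, x] (or [x, 0]), then ∫_0^x f(t) dt = ∑_{i=0}^∞ (-1)^i f^{(i)}(x) x^{i+1}/(i+1)!. -/
theorem stmt_18 (f : ℝ → ℝ) (hf : ContDiff ℝ (⊤ : ℕ∞) f) (x : ℝ) (M R : ℝ)
    (hM : 0 < M) (hR : 0 < R)
    (hbound : ∀ n : ℕ, ∀ t ∈ Set.uIcc (0 : ℝ) x, |iteratedDeriv n f t| ≤ M * R ^ n) :
    ∫ t in (0 : ℝ)..x, f t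
      = ∑' i : ℕ, (-1 : ℝ) ^ i * iteratedDeriv i f x * x ^ (i + 1)
          / (Nat.factorial (i + 1) : ℝ) := by
  set a : ℕ → ℝ := fun i => (-1 : ℝ) ^ i * iteratedDeriv i f x * x ^ (i + 1)
      / (Nat.factorial (i + 1) : ℝ) with ha
  set I : ℕ → ℝ := fun k => ∫ t in (0:ℝ)..x, iteratedDeriv k f t * (t ^ k / (Nat.factorial k : ℝ)) with hI
  have hcont : ∀ k : ℕ, Continuous (iteratedDeriv k f) := fun k =>
    hf.continuous_iteratedDeriv k (by exact_mod_cast le_top)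
  have hdiff : ∀ k : ℕ, Differentiable ℝ (iteratedDeriv k f) := fun k =>
    hf.differentiable_iteratedDeriv k (by exact_mod_cast ENat.coe_lt_top k)
  have hintg : ∀ k : ℕ, IntervalIntegrable
      (fun t => iteratedDeriv k f t * (t ^ k / (Nat.factorial k : ℝ))) MeasureTheory.volume 0 x := by
    intro k
    exact ((hcont k).mul (by continuity)).intervalIntegrable 0 x
  -- integration by parts step
  have hstep : ∀ n : ℕ, I n = iteratedDeriv n f x * (x ^ (n+1) / (Nat.factorial (n+1) : ℝ)) - I (n+1) := by
    intro n
    have hu : ∀ t ∈ Set.uIcc (0:ℝ) x, HasDerivAt (iteratedDeriv n f) (iteratedDeriv (n+1) f t) t := by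
      intro t _
      have := ((hdiff n) t).hasDerivAt
      rwa [iteratedDeriv_succ]
    have hv : ∀ t ∈ Set.uIcc (0:ℝ) x,
        HasDerivAt (fun t : ℝ => t ^ (n+1) / (Nat.factorial (n+1) : ℝ))
          (t ^ n / (Nat.factorial n : ℝ)) t := by
      intro t _
      have h1 : HasDerivAt (fun t : ℝ => t ^ (n+1)) ((n+1 : ℕ) * t ^ n) t := by
        simpa using hasDerivAt_pow (n+1) t
      have h2 := h1.div_const (Nat.factorial (n+1) : ℝ)
      refine h2.congr_deriv ?_
      have : ((Nat.factorial (n+1) : ℝ)) = (n+1 : ℕ) * (Nat.factorial n : ℝ) := by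
        rw [Nat.factorial_succ]; push_cast; ring
      rw [this]
      field_simp
    have := intervalIntegral.integral_mul_deriv_eq_deriv_mul hu hv
      (((hcont (n+1))).intervalIntegrable 0 x)
      ((by continuity : Continuous (fun t : ℝ => t ^ n / (Nat.factorial n : ℝ))).intervalIntegrable 0 x)
    simp only [hI]
    rw [this]
    simp
  -- partial sums identity
  have hpartial : ∀ m : ℕ, ∑ i ∈ Finset.range m, a i = (∫ t in (0:ℝ)..x, f t) - (-1:ℝ)^m * I m := by
    intro m
    induction m with
    | zero => simp [hI, iteratedDeriv_zero]
    | succ n ih =>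
        rw [Finset.sum_range_succ, ih, hstep n, ha]
        simp only [pow_succ]
        ring
  -- remainder bound
  have hbnd : ∀ k : ℕ, |I k| ≤ (M * |x|) * ((R * |x|) ^ k / (Nat.factorial k : ℝ)) := by
    intro k
    have : ∀ t ∈ Set.uIcc (0:ℝ) x,
        ‖iteratedDeriv k f t * (t ^ k / (Nat.factorial k : ℝ))‖
          ≤ M * R ^ k * (|x| ^ k / (Nat.factorial k : ℝ)) := by
      intro t ht
      have htx : |t| ≤ |x| := by
        rcases Set.mem_uIcc.1 ht with ⟨h1, h2⟩ | ⟨h1, h2⟩ <;>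
        · rw [abs_le]; constructor <;> nlinarith [abs_nonneg x, le_abs_self x, neg_abs_le x]
      have h1 := hbound k t ht
      have h2 : |t ^ k / (Nat.factorial k : ℝ)| ≤ |x| ^ k / (Nat.factorial k : ℝ) := by
        rw [abs_div, abs_pow, Nat.abs_cast]
        exact div_le_div_of_nonneg_right (pow_le_pow_left₀ (abs_nonneg t) htx k) (by positivity) |>.trans_eq rfl
      calc ‖iteratedDeriv k f t * (t ^ k / (Nat.factorial k : ℝ))‖
          = |iteratedDeriv k f t| * |t ^ k / (Nat.factorial k : ℝ)| := abs_mul _ _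
        _ ≤ (M * R ^ k) * (|x| ^ k / (Nat.factorial k : ℝ)) := by
            apply mul_le_mul h1 h2 (abs_nonneg _) (by positivity)
    have := intervalIntegral.norm_integral_le_of_norm_le_const
      (fun t ht => this t (Set.Ioc_subset_Icc_self ht))
    simp only [sub_zero] at this
    calc |I k| ≤ M * R ^ k * (|x| ^ k / (Nat.factorial k : ℝ)) * |x| := this
      _ = (M * |x|) * ((R * |x|) ^ k / (Nat.factorial k : ℝ)) := by
          rw [mul_pow]; ring
  -- remainder tends to zero
  have htend : Filter.Tendsto (fun m => (-1:ℝ)^m * I m) Filter.atTop (nhds 0) := by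
    have h0 : Filter.Tendsto (fun m => (M * |x|) * ((R * |x|) ^ m / (Nat.factorial m : ℝ)))
        Filter.atTop (nhds 0) := by
      have := (Real.summable_pow_div_factorial (R * |x|)).tendsto_atTop_zero
      simpa using this.const_mul (M * |x|)
    refine squeeze_zero_norm (fun m => ?_) h0
    rw [norm_mul, norm_pow, norm_neg, norm_one, one_pow, one_mul]
    exact hbnd m
  have htend2 : Filter.Tendsto (fun m => ∑ i ∈ Finset.range m, a i) Filter.atTop
      (nhds (∫ t in (0:ℝ)..x, f t)) := by
    simp only [hpartial]
    simpa using (tendsto_const_nhds.sub htend)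
  -- summability
  have hsum : Summable a := by
    apply Summable.of_norm_bounded (g := fun i => (M * |x|) * ((R * |x|) ^ i / (Nat.factorial i : ℝ)))
      ((Real.summable_pow_div_factorial (R * |x|)).mul_left (M * |x|))
    intro i
    have h1 := hbound i x (Set.right_mem_uIcc)
    have h2 : (Nat.factorial i : ℝ) ≤ (Nat.factorial (i+1) : ℝ) := by
      exact_mod_cast Nat.factorial_le (Nat.le_succ i)
    rw [ha]
    simp only [norm_div, norm_mul, norm_pow, norm_neg, norm_one, one_pow, one_mul, Real.norm_eq_abs,
      Nat.abs_cast]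
    have hfi : (0:ℝ) < Nat.factorial i := by positivity
    calc |iteratedDeriv i f x| * |x| ^ (i+1) / (Nat.factorial (i+1) : ℝ)
        ≤ (M * R ^ i) * |x| ^ (i+1) / (Nat.factorial (i+1) : ℝ) := by
          gcongr
      _ ≤ (M * R ^ i) * |x| ^ (i+1) / (Nat.factorial i : ℝ) := by
          gcongr
      _ = (M * |x|) * ((R * |x|) ^ i / (Nat.factorial i : ℝ)) := by
          rw [mul_pow, pow_succ]; ring
  exact (tendsto_nhds_unique hsum.hasSum.tendsto_sum_nat htend2).symm
end
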